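/- arXiv:1009.0886 — 2 statements merged into one kernel-verified Lean document; each statement's English description precedes it below -/
import Mathlib

section
/- In any reduced decomposition of a permutation, any two occurrences of consecutive substrings of the form (i+1, i, i+1) (for possibly different values of i) occupy disjoint sets of positions. -/
/-- The adjacent transposition `s_i` of `S_n` (1-based: swaps positions `i` and `i+1`). -/
def adjT (n : ℕ) (i : ℕ) : Equiv.Perm (Fin n) :=
  if h : 1 ≤ i ∧ i < n then Equiv.swap ⟨i - 1, by omega⟩ ⟨i, h.2⟩ else 1

/-- The number of inversions of a permutation of `Fin n`. -/
def invCount (n : ℕ) (w : Equiv.Perm (Fin n)) : ℕ :=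
  (Finset.univ.filter fun p : Fin n × Fin n => p.1 < p.2 ∧ w p.2 < w p.1).card

/-- `ρ` is a reduced decomposition of `w`: a word of length `inv(w)` in the letters
`1, …, n-1` whose product of adjacent transpositions is `w`. -/
def IsReducedDecomp (n : ℕ) (w : Equiv.Perm (Fin n)) (ρ : List ℕ) : Prop :=
  (∀ r ∈ ρ, 1 ≤ r ∧ r < n) ∧ (ρ.map (adjT n)).prod = w ∧ ρ.length = invCount n w

/-- A short braid move: swapping two adjacent letters differing by at least 2. -/
def ShortBraidMove (ρ ρ' : List ℕ) : Prop :=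
  ∃ l r : List ℕ, ∃ a b : ℕ, (a + 2 ≤ b ∨ b + 2 ≤ a) ∧
    ρ = l ++ [a, b] ++ r ∧ ρ' = l ++ [b, a] ++ r

/-- Two words are in the same commutation class iff related by short braid moves. -/
def CommEquiv : List ℕ → List ℕ → Prop := Relation.ReflTransGen ShortBraidMove

/-- A long braid move: `(i+1, i, i+1) ↔ (i, i+1, i)` on a consecutive substring. -/
def LongBraidMove (ρ ρ' : List ℕ) : Prop :=
  ∃ l r : List ℕ, ∃ i : ℕ,
    (ρ = l ++ [i + 1, i, i + 1] ++ r ∧ ρ' = l ++ [i, i + 1, i] ++ r) ∨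
    (ρ = l ++ [i, i + 1, i] ++ r ∧ ρ' = l ++ [i + 1, i, i + 1] ++ r)

/-- The number of commutation classes of reduced decompositions of `w`. -/
noncomputable def numCommClasses (n : ℕ) (w : Equiv.Perm (Fin n)) : ℕ :=
  Nat.card (Quot fun a b : {ρ : List ℕ // IsReducedDecomp n w ρ} => CommEquiv a.1 b.1)

/-- The arrangement (position ↦ value) after the first `k` steps of the word `ρ`. -/
def prefixPerm (n : ℕ) (ρ : List ℕ) (k : ℕ) : Equiv.Perm (Fin n) :=
  ((ρ.take k).map (adjT n)).prod

/-- The word induced by `ρ` on a set `A` of values: record, in order, each step of `ρ`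
swapping two values of `A`, labeled (1-based) by the relative position of the swapped
pair among the values of `A`. -/
def inducedWord (n : ℕ) (ρ : List ℕ) (A : Finset (Fin n)) : List ℕ :=
  (List.range ρ.length).filterMap fun k =>
    let u := prefixPerm n ρ k
    let i := ρ.getD k 0
    if h : 1 ≤ i ∧ i < n then
      if u ⟨i - 1, by omega⟩ ∈ A ∧ u ⟨i, h.2⟩ ∈ A then
        some ((A.filter fun x => (u.symm x : ℕ) < i - 1).card + 1)
      else none
    else none

/-- The number of `(2,1,2)`-subnetworks of `ρ`. -/
def count212 (n : ℕ) (ρ : List ℕ) : ℕ :=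
  (Finset.univ.filter fun A : Finset (Fin n) =>
    A.card = 3 ∧ inducedWord n ρ A = [2, 1, 2]).card

/-- The number of 321-patterns of `w`. -/
def N321 (n : ℕ) (w : Equiv.Perm (Fin n)) : ℕ :=
  (Finset.univ.filter fun t : Fin n × Fin n × Fin n =>
    t.1 < t.2.1 ∧ t.2.1 < t.2.2 ∧ w t.2.2 < w t.2.1 ∧ w t.2.1 < w t.1).card

/-!
Two occurrences of `(i+1, i, i+1)` and `(j+1, j, j+1)` at positions `p < q < p + 3` overlap
either in two letters, forcing `i = j + 1` and `i + 1 = j`, or in one letter, forcing `i = j`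
and producing the factor `(i+1, i, i+1, i, i+1)`. By the braid relation and `s_i² = 1` this
factor multiplies to `s_i`, so replacing it by `(i)` gives a word for `w` four letters shorter.
That is impossible: inversion counts are subadditive and `s_i` has at most one inversion, so no
word for `w` is shorter than `inv(w)`.
-/

def inversions (n : ℕ) (w : Equiv.Perm (Fin n)) : Finset (Fin n × Fin n) :=
  Finset.univ.filter fun p : Fin n × Fin n => p.1 < p.2 ∧ w p.2 < w p.1

@[simp]
lemma mem_inversions {n : ℕ} {w : Equiv.Perm (Fin n)} {p : Fin n × Fin n} :
    p ∈ inversions n w ↔ p.1 < p.2 ∧ w p.2 < w p.1 := by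
  simp [inversions]

lemma invCount_eq_card_inversions (n : ℕ) (w : Equiv.Perm (Fin n)) :
    invCount n w = (inversions n w).card := rfl

lemma invCount_one (n : ℕ) : invCount n 1 = 0 := by
  rw [invCount_eq_card_inversions, Finset.card_eq_zero, Finset.eq_empty_iff_forall_notMem]
  exact fun p hp => lt_asymm (mem_inversions.1 hp).1 (mem_inversions.1 hp).2

lemma invCount_mul_le (n : ℕ) (σ τ : Equiv.Perm (Fin n)) :
    invCount n (σ * τ) ≤ invCount n σ + invCount n τ := by
  simp only [invCount_eq_card_inversions]
  -- a pair inverted by `σ * τ` but not by `τ` is carried by `τ` to a pair inverted by `σ`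
  have hsub : inversions n (σ * τ) ⊆
      (inversions n σ).image (Prod.map τ.symm τ.symm) ∪ inversions n τ := by
    rintro ⟨a, b⟩ hab
    rw [mem_inversions, Equiv.Perm.mul_apply, Equiv.Perm.mul_apply] at hab
    rw [Finset.mem_union, Finset.mem_image, mem_inversions]
    by_cases hτ : τ b < τ a
    · exact Or.inr ⟨hab.1, hτ⟩
    · refine Or.inl ⟨(τ a, τ b), mem_inversions.2 ⟨?_, hab.2⟩, by simp⟩
      exact lt_of_le_of_ne (not_lt.1 hτ) (τ.injective.ne hab.1.ne)
  calc (inversions n (σ * τ)).card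
      ≤ ((inversions n σ).image (Prod.map τ.symm τ.symm) ∪ inversions n τ).card :=
        Finset.card_le_card hsub
    _ ≤ ((inversions n σ).image (Prod.map τ.symm τ.symm)).card + (inversions n τ).card :=
        Finset.card_union_le _ _
    _ ≤ (inversions n σ).card + (inversions n τ).card := by grw [Finset.card_image_le]

lemma adjT_eq_swap (n i : ℕ) (hi : 1 ≤ i) (hin : i < n) :
    adjT n i = Equiv.swap ⟨i - 1, by omega⟩ ⟨i, hin⟩ :=
  dif_pos ⟨hi, hin⟩

lemma invCount_adjT_le_one (n i : ℕ) : invCount n (adjT n i) ≤ 1 := by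
  by_cases hi : 1 ≤ i ∧ i < n
  · rw [adjT_eq_swap n i hi.1 hi.2, invCount_eq_card_inversions]
    refine (Finset.card_le_card (t := {(⟨i - 1, by omega⟩, ⟨i, hi.2⟩)}) ?_).trans
      (Finset.card_singleton _).le
    rintro ⟨x, y⟩ hxy
    rw [mem_inversions, Equiv.swap_apply_def, Equiv.swap_apply_def] at hxy
    rw [Finset.mem_singleton, Prod.mk.injEq, Fin.ext_iff, Fin.ext_iff]
    obtain ⟨hlt, hswap⟩ := hxy
    split_ifs at hswap <;> simp only [Fin.ext_iff, Fin.lt_def] at * <;> omega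
  · rw [adjT, dif_neg hi, invCount_one]
    exact zero_le_one

lemma invCount_prod_map_adjT_le (n : ℕ) (ρ : List ℕ) :
    invCount n (ρ.map (adjT n)).prod ≤ ρ.length := by
  induction ρ with
  | nil => simp [invCount_one]
  | cons r ρ ih =>
    simp only [List.map_cons, List.prod_cons, List.length_cons]
    have := invCount_mul_le n (adjT n r) (ρ.map (adjT n)).prod
    have := invCount_adjT_le_one n r
    omega

lemma adjT_mul_self (n i : ℕ) : adjT n i * adjT n i = 1 := by
  unfold adjT
  split_ifs <;> simp

lemma adjT_braid (n i : ℕ) (hi : 1 ≤ i) (hin : i + 1 < n) :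
    adjT n (i + 1) * adjT n i * adjT n (i + 1) = adjT n i * adjT n (i + 1) * adjT n i := by
  rw [adjT_eq_swap n i hi (by omega), adjT_eq_swap n (i + 1) (by omega) hin]
  set a : Fin n := ⟨i - 1, by omega⟩
  set b : Fin n := ⟨i + 1 - 1, by omega⟩
  set c : Fin n := ⟨i + 1, hin⟩
  have hb : (⟨i, by omega⟩ : Fin n) = b := Fin.ext (by simp [b])
  have hab : a ≠ b := Fin.ne_of_val_ne (by simp only [a, b]; omega)
  have hac : a ≠ c := Fin.ne_of_val_ne (by simp only [a, c]; omega)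
  have hcb : c ≠ b := Fin.ne_of_val_ne (by simp only [b, c]; omega)
  rw [hb, Equiv.swap_mul_swap_mul_swap hab hac, Equiv.swap_comm a b, Equiv.swap_comm b c,
    Equiv.swap_mul_swap_mul_swap hcb hac.symm, Equiv.swap_comm]

lemma adjT_braid_five (n i : ℕ) (hi : 1 ≤ i) (hin : i + 1 < n) :
    adjT n (i + 1) * adjT n i * adjT n (i + 1) * adjT n i * adjT n (i + 1) = adjT n i := by
  rw [adjT_braid n i hi hin]
  simp only [mul_assoc, adjT_mul_self, mul_one]

theorem IsReducedDecomp.not_braid_five_infix {n : ℕ} {w : Equiv.Perm (Fin n)} {ρ : List ℕ}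
    (h : IsReducedDecomp n w ρ) (i : ℕ) : ¬ [i + 1, i, i + 1, i, i + 1] <:+: ρ := by
  rintro ⟨s, t, rfl⟩
  obtain ⟨hletters, hprod, hlen⟩ := h
  have hi : 1 ≤ i := (hletters i (by simp)).1
  have hin : i + 1 < n := (hletters (i + 1) (by simp)).2
  have hshorter : ((s ++ [i] ++ t).map (adjT n)).prod = w := by
    rw [← hprod]
    simp only [List.map_append, List.prod_append, List.map_cons, List.map_nil, List.prod_cons,
      List.prod_nil, mul_one, adjT_braid_five n i hi hin, ← mul_assoc]
  have := invCount_prod_map_adjT_le n (s ++ [i] ++ t)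
  rw [hshorter] at this
  simp only [List.length_append, List.length_cons, List.length_nil] at hlen this
  omega

lemma take_three_drop_one_ne {τ : List ℕ} {i j : ℕ} (h : τ.take 3 = [i + 1, i, i + 1]) :
    (τ.drop 1).take 3 ≠ [j + 1, j, j + 1] := by
  match τ with
  | a :: b :: c :: τ => simp_all; omega
  | [] | [_] | [_, _] => simp_all

lemma braid_five_isPrefix_of_take_three_drop_two {τ : List ℕ} {i j : ℕ}
    (h : τ.take 3 = [i + 1, i, i + 1]) (h' : (τ.drop 2).take 3 = [j + 1, j, j + 1]) :
    [i + 1, i, i + 1, i, i + 1] <+: τ := by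
  match τ with
  | a :: b :: c :: d :: e :: τ => simp_all
  | [] | [_] | [_, _] | [_, _, _] | [_, _, _, _] => simp_all

/-- Two distinct occurrences of consecutive substrings `(i+1, i, i+1)`
in a reduced decomposition occupy disjoint sets of positions. -/
theorem downward_moves_disjoint
    (n : ℕ) (w : Equiv.Perm (Fin n)) (ρ : List ℕ) (h : IsReducedDecomp n w ρ)
    (p q i j : ℕ)
    (hp : (ρ.drop p).take 3 = [i + 1, i, i + 1])
    (hq : (ρ.drop q).take 3 = [j + 1, j, j + 1])
    (hpq : p ≠ q) :
    p + 3 ≤ q ∨ q + 3 ≤ p := by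
  wlog hlt : p < q generalizing p q i j
  · exact (this q p j i hq hp hpq.symm (by omega)).symm
  by_contra hoverlap
  obtain ⟨d, rfl⟩ : ∃ d, q = p + d := ⟨q - p, by omega⟩
  rw [← List.drop_drop] at hq
  obtain rfl | rfl : d = 1 ∨ d = 2 := by omega
  · exact take_three_drop_one_ne hp hq
  · exact h.not_braid_five_infix i
      ((braid_five_isPrefix_of_take_three_drop_two hp hq).isInfix.trans
        (List.drop_suffix p ρ).isInfix)
end

section
/- Applying a downward long braid move (replacing consecutive (i+1, i, i+1) by (i, i+1, i)) to a reduced decomposition of w ∈ S_n decreases the number of (2,1,2)-subnetworks by exactly 1. -/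
open Equiv Finset

lemma Equiv.Perm.symm_mul_apply {α : Type*} (u σ : Perm α) (x : α) :
    (u * σ).symm x = σ.symm (u.symm x) :=
  rfl

lemma Equiv.swap_apply_of_lt {α : Type*} [DecidableEq α] [Preorder α] {a b p : α} (ha : p < a)
    (hb : p < b) : swap a b p = p :=
  swap_apply_of_ne_of_ne ha.ne hb.ne

lemma Fin.swap_lt_swap_iff {n : ℕ} {a b p q : Fin n} (hab : (a : ℕ) + 1 = b)
    (h : ¬ (p = a ∧ q = b ∨ p = b ∧ q = a)) : swap a b p < swap a b q ↔ p < q := by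
  simp only [Fin.ext_iff, Fin.lt_def] at h ⊢
  rw [swap_apply_def, swap_apply_def]
  split_ifs <;> simp only [Fin.ext_iff] at * <;> omega

lemma List.length_filterMap_range {β : Type*} (L : ℕ) (f : ℕ → Option β) :
    ((List.range L).filterMap f).length = #{k ∈ Finset.range L | (f k).isSome} := by
  rw [List.length_filterMap_eq_countP, card_def, filter_val, range_val, Multiset.range,
    Multiset.filter_coe, Multiset.coe_card, List.countP_eq_length_filter]
  simp

lemma Finset.card_filter_add_one_of_forall_ne {α : Type*} [DecidableEq α] (s : Finset α)
    {p q : α → Prop} [DecidablePred p] [DecidablePred q] {a : α} (ha : a ∈ s) (hp : p a)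
    (hq : ¬ q a) (h : ∀ x ∈ s, x ≠ a → (q x ↔ p x)) : #{x ∈ s | q x} + 1 = #{x ∈ s | p x} := by
  have herase : {x ∈ s | q x} = {x ∈ s | p x}.erase a := by
    ext x
    by_cases hx : x = a
    · simp [hx, hq]
    · rw [mem_erase, mem_filter, mem_filter, and_iff_right hx]
      exact and_congr_right (h x · hx)
  rw [herase, card_erase_add_one (mem_filter.mpr ⟨ha, hp⟩)]

variable {n : ℕ}

lemma adjT_of_lt {j : ℕ} (a b : Fin n) (ha : (a : ℕ) + 1 = j) (hb : (b : ℕ) = j) :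
    adjT n j = swap a b := by
  have hj : 1 ≤ j ∧ j < n := ⟨by omega, hb ▸ b.isLt⟩
  rw [adjT, dif_pos hj, show (⟨j - 1, _⟩ : Fin n) = a from Fin.ext (by simp only; omega),
    show (⟨j, hj.2⟩ : Fin n) = b from Fin.ext hb.symm]

lemma prefixPerm_succ {ρ : List ℕ} {k : ℕ} (hk : k < ρ.length) :
    prefixPerm n ρ (k + 1) = prefixPerm n ρ k * adjT n (ρ.getD k 0) := by
  rw [prefixPerm, prefixPerm, List.take_add_one, List.map_append, List.prod_append,
    List.getD_eq_getElem _ _ hk]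
  simp [List.getElem?_eq_getElem hk]

lemma prefixPerm_length (ρ : List ℕ) : prefixPerm n ρ ρ.length = (ρ.map (adjT n)).prod := by
  rw [prefixPerm, List.take_length]

lemma one_le_getD_and_getD_lt {ρ : List ℕ} (hρ : ∀ s ∈ ρ, 1 ≤ s ∧ s < n) {k : ℕ}
    (hk : k < ρ.length) : 1 ≤ ρ.getD k 0 ∧ ρ.getD k 0 < n := by
  rw [List.getD_eq_getElem _ _ hk]
  exact hρ _ (List.getElem_mem hk)

def swappedPair (u : Perm (Fin n)) (j : ℕ) : Finset (Fin n) :=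
  if h : 1 ≤ j ∧ j < n then {u ⟨j - 1, by omega⟩, u ⟨j, h.2⟩} else ∅

def swappedAt (n : ℕ) (ρ : List ℕ) (k : ℕ) : Finset (Fin n) :=
  swappedPair (prefixPerm n ρ k) (ρ.getD k 0)

lemma swappedPair_of_lt (u : Perm (Fin n)) {j : ℕ} (a b : Fin n) (ha : (a : ℕ) + 1 = j)
    (hb : (b : ℕ) = j) : swappedPair u j = {u a, u b} := by
  have hj : 1 ≤ j ∧ j < n := ⟨by omega, hb ▸ b.isLt⟩
  rw [swappedPair, dif_pos hj, show (⟨j - 1, _⟩ : Fin n) = a from Fin.ext (by simp only; omega),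
    show (⟨j, hj.2⟩ : Fin n) = b from Fin.ext hb.symm]

lemma card_swappedPair (u : Perm (Fin n)) {j : ℕ} (hj : 1 ≤ j ∧ j < n) :
    #(swappedPair u j) = 2 := by
  rw [swappedPair_of_lt u ⟨j - 1, by omega⟩ ⟨j, hj.2⟩ (by simp only; omega) rfl]
  exact card_pair (u.injective.ne (Fin.ne_of_val_ne (by simp only; omega)))

lemma symm_mul_adjT_lt_iff {u : Perm (Fin n)} {j : ℕ} (hj : 1 ≤ j ∧ j < n) {x y : Fin n}
    (h : swappedPair u j ≠ {x, y}) :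
    (u * adjT n j).symm x < (u * adjT n j).symm y ↔ u.symm x < u.symm y := by
  set a : Fin n := ⟨j - 1, by omega⟩
  set b : Fin n := ⟨j, hj.2⟩
  have ha : (a : ℕ) + 1 = j := by simp only [a]; omega
  rw [swappedPair_of_lt u a b ha rfl] at h
  rw [adjT_of_lt a b ha rfl, Perm.symm_mul_apply, Perm.symm_mul_apply, symm_swap]
  refine Fin.swap_lt_swap_iff ha fun hxy => h ?_
  rcases hxy with ⟨hx, hy⟩ | ⟨hx, hy⟩
  · rw [← hx, ← hy, apply_symm_apply, apply_symm_apply]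
  · rw [← hx, ← hy, apply_symm_apply, apply_symm_apply, pair_comm]

lemma prefixPerm_symm_lt_iff {ρ : List ℕ} (hρ : ∀ s ∈ ρ, 1 ≤ s ∧ s < n) {x y : Fin n} {m : ℕ}
    (hm : m ≤ ρ.length) (h : ∀ k < m, swappedAt n ρ k ≠ {x, y}) :
    (prefixPerm n ρ m).symm x < (prefixPerm n ρ m).symm y ↔ x < y := by
  induction m with
  | zero => rfl
  | succ k ih =>
    rw [prefixPerm_succ hm,
      symm_mul_adjT_lt_iff (one_le_getD_and_getD_lt hρ hm) (h k k.lt_succ_self)]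
    exact ih (by omega) fun k' hk' => h k' (by omega)

def inversionPairs (w : Perm (Fin n)) : Finset (Finset (Fin n)) :=
  (univ.filter fun p : Fin n × Fin n => p.1 < p.2 ∧ w p.2 < w p.1).image fun p => {w p.1, w p.2}

lemma card_inversionPairs (w : Perm (Fin n)) : #(inversionPairs w) = invCount n w := by
  refine card_image_of_injOn fun ⟨p₁, p₂⟩ hp ⟨q₁, q₂⟩ hq hpq => ?_
  simp only [coe_filter, mem_univ, true_and, Set.mem_ofPred_eq] at hp hq
  have hp₁ : w p₁ ∈ ({w q₁, w q₂} : Finset (Fin n)) := hpq ▸ mem_insert_self _ _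
  have hp₂ : w p₂ ∈ ({w q₁, w q₂} : Finset (Fin n)) := hpq ▸ by simp
  simp only [mem_insert, mem_singleton, w.injective.eq_iff] at hp₁ hp₂
  rcases hp₁ with rfl | rfl <;> rcases hp₂ with rfl | rfl
  all_goals first | rfl | (exfalso; order)

lemma inversionPairs_subset {w : Perm (Fin n)} {ρ : List ℕ} (hρ : ∀ s ∈ ρ, 1 ≤ s ∧ s < n)
    (hw : (ρ.map (adjT n)).prod = w) :
    inversionPairs w ⊆ (range ρ.length).image (swappedAt n ρ) := by
  intro B hB
  obtain ⟨⟨p, q⟩, hpq, rfl⟩ := mem_image.mp hB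
  simp only [mem_filter, mem_univ, true_and] at hpq
  by_contra hnot
  have horder := prefixPerm_symm_lt_iff hρ le_rfl (x := w p) (y := w q) fun k hk hk' =>
    hnot (mem_image.mpr ⟨k, mem_range.mpr hk, hk'⟩)
  rw [prefixPerm_length, hw, symm_apply_apply, symm_apply_apply] at horder
  exact absurd (horder.mp hpq.1) (not_lt.mpr hpq.2.le)

lemma IsReducedDecomp.injOn_swappedAt {w : Perm (Fin n)} {ρ : List ℕ}
    (h : IsReducedDecomp n w ρ) : Set.InjOn (swappedAt n ρ) (range ρ.length) := by
  obtain ⟨hρ, hw, hlen⟩ := h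
  rw [← card_image_iff]
  refine le_antisymm card_image_le ?_
  calc #(range ρ.length) = #(inversionPairs w) := by rw [card_range, hlen, card_inversionPairs]
    _ ≤ _ := card_le_card (inversionPairs_subset hρ hw)

def inducedLetter (A : Finset (Fin n)) (u : Perm (Fin n)) (j : ℕ) : Option ℕ :=
  if h : 1 ≤ j ∧ j < n then
    if u ⟨j - 1, by omega⟩ ∈ A ∧ u ⟨j, h.2⟩ ∈ A then
      some ((A.filter fun x => (u.symm x : ℕ) < j - 1).card + 1)
    else none
  else none

lemma inducedWord_eq_filterMap (ρ : List ℕ) (A : Finset (Fin n)) :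
    inducedWord n ρ A = (List.range ρ.length).filterMap
      fun k => inducedLetter A (prefixPerm n ρ k) (ρ.getD k 0) :=
  rfl

lemma inducedLetter_of_lt (A : Finset (Fin n)) (u : Perm (Fin n)) {j : ℕ} (a b : Fin n)
    (ha : (a : ℕ) + 1 = j) (hb : (b : ℕ) = j) :
    inducedLetter A u j =
      if u a ∈ A ∧ u b ∈ A then some (#{x ∈ A | (u.symm x : ℕ) < a} + 1) else none := by
  have hj : 1 ≤ j ∧ j < n := ⟨by omega, hb ▸ b.isLt⟩
  rw [inducedLetter, dif_pos hj, show (⟨j - 1, _⟩ : Fin n) = a from Fin.ext (by simp only; omega),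
    show (⟨j, hj.2⟩ : Fin n) = b from Fin.ext hb.symm, show j - 1 = a by omega]

lemma isSome_inducedLetter_iff {A : Finset (Fin n)} {u : Perm (Fin n)} {j : ℕ}
    (hj : 1 ≤ j ∧ j < n) : (inducedLetter A u j).isSome ↔ swappedPair u j ⊆ A := by
  rw [inducedLetter_of_lt A u ⟨j - 1, by omega⟩ ⟨j, hj.2⟩ (by simp only; omega) rfl,
    swappedPair_of_lt u ⟨j - 1, by omega⟩ ⟨j, hj.2⟩ (by simp only; omega) rfl, insert_subset_iff,
    singleton_subset_iff]
  split_ifs with h <;> simp [h]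

lemma IsReducedDecomp.length_inducedWord_le {w : Perm (Fin n)} {ρ : List ℕ}
    (h : IsReducedDecomp n w ρ) (A : Finset (Fin n)) :
    (inducedWord n ρ A).length ≤ A.card.choose 2 := by
  rw [inducedWord_eq_filterMap, List.length_filterMap_range, ← card_powersetCard]
  refine card_le_card_of_injOn (swappedAt n ρ) (fun k hk => ?_)
    (h.injOn_swappedAt.mono (filter_subset _ _))
  simp only [coe_filter, mem_range, Set.mem_ofPred_eq] at hk
  have hv := one_le_getD_and_getD_lt h.1 hk.1
  exact mem_powersetCard.mpr ⟨(isSome_inducedLetter_iff hv).mp hk.2, card_swappedPair _ hv⟩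

def inducedWordFrom (A : Finset (Fin n)) : Perm (Fin n) → List ℕ → List ℕ
  | _, [] => []
  | u, j :: ρ => (inducedLetter A u j).toList ++ inducedWordFrom A (u * adjT n j) ρ

lemma filterMap_inducedLetter_eq_inducedWordFrom (A : Finset (Fin n)) (u : Perm (Fin n))
    (ρ : List ℕ) :
    (List.range ρ.length).filterMap (fun k => inducedLetter A (u * prefixPerm n ρ k) (ρ.getD k 0))
      = inducedWordFrom A u ρ := by
  induction ρ generalizing u with
  | nil => rfl
  | cons j ρ ih =>
    have hstep (k : ℕ) : prefixPerm n (j :: ρ) (k + 1) = adjT n j * prefixPerm n ρ k := by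
      simp [prefixPerm]
    have hzero : prefixPerm n (j :: ρ) 0 = 1 := rfl
    rw [List.length_cons, List.range_succ_eq_map, List.filterMap_cons, List.filterMap_map]
    simp only [Function.comp_def, Nat.succ_eq_add_one, hstep, hzero, List.getD_cons_succ,
      List.getD_cons_zero, mul_one, ← mul_assoc, ih, inducedWordFrom]
    cases inducedLetter A u j <;> rfl

lemma inducedWordFrom_append (A : Finset (Fin n)) (u : Perm (Fin n)) (ρ σ : List ℕ) :
    inducedWordFrom A u (ρ ++ σ) =
      inducedWordFrom A u ρ ++ inducedWordFrom A (u * (ρ.map (adjT n)).prod) σ := by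
  induction ρ generalizing u with
  | nil => simp [inducedWordFrom]
  | cons j ρ ih => simp [inducedWordFrom, ih, mul_assoc]

lemma inducedWord_append_append (l m r : List ℕ) (A : Finset (Fin n)) :
    inducedWord n (l ++ m ++ r) A =
      inducedWordFrom A 1 l ++ inducedWordFrom A (l.map (adjT n)).prod m ++
        inducedWordFrom A ((l.map (adjT n)).prod * (m.map (adjT n)).prod) r := by
  have hword := filterMap_inducedLetter_eq_inducedWordFrom A 1 (l ++ m ++ r)
  simp only [one_mul] at hword
  rw [inducedWord_eq_filterMap, hword, inducedWordFrom_append, inducedWordFrom_append]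
  simp only [List.map_append, List.prod_append, one_mul]

lemma card_filter_symm_lt_of_succ (A : Finset (Fin n)) (u : Perm (Fin n)) {a b : Fin n}
    (hab : (a : ℕ) + 1 = b) :
    #{x ∈ A | (u.symm x : ℕ) < b} = #{x ∈ A | (u.symm x : ℕ) < a} + if u a ∈ A then 1 else 0 := by
  have hsplit (x : Fin n) : (if (u.symm x : ℕ) < b then 1 else 0) =
      (if (u.symm x : ℕ) < a then 1 else 0) + if u a = x then 1 else 0 := by
    simp only [eq_comm (a := u a), ← u.symm_apply_eq, Fin.ext_iff]
    split_ifs <;> omega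
  simp only [card_filter, hsplit, sum_add_distrib, sum_ite_eq]

lemma card_filter_mul_symm_lt (A : Finset (Fin n)) (u σ : Perm (Fin n)) {t : ℕ}
    (hσ : ∀ p : Fin n, (p : ℕ) < t → σ p = p) :
    #{x ∈ A | ((u * σ).symm x : ℕ) < t} = #{x ∈ A | (u.symm x : ℕ) < t} := by
  refine congrArg card (filter_congr fun x _ => ?_)
  rw [Perm.symm_mul_apply]
  constructor
  · intro h
    rwa [← hσ _ h, apply_symm_apply] at h
  · intro h
    rwa [σ.symm_apply_eq.mpr (hσ _ h).symm]

section BraidMove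

variable {i : ℕ} {a b c : Fin n} (ha : (a : ℕ) + 1 = i) (hb : (b : ℕ) = i) (hc : (c : ℕ) = i + 1)
include ha hb hc

lemma prod_map_adjT_braid :
    ([i + 1, i, i + 1].map (adjT n)).prod = ([i, i + 1, i].map (adjT n)).prod := by
  have hab : a ≠ b := Fin.ne_of_val_ne (by omega)
  have hac : a ≠ c := Fin.ne_of_val_ne (by omega)
  have hbc : b ≠ c := Fin.ne_of_val_ne (by omega)
  simp only [List.map_cons, List.map_nil, List.prod_cons, List.prod_nil, mul_one, ← mul_assoc]
  rw [adjT_of_lt a b ha hb, adjT_of_lt b c (by omega) hc, swap_mul_swap_mul_swap hab hac,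
    swap_comm a b, swap_comm b c, swap_mul_swap_mul_swap hbc.symm hac.symm, swap_comm]

variable (A : Finset (Fin n)) (v : Perm (Fin n))

lemma card_triple : #({v a, v b, v c} : Finset (Fin n)) = 3 :=
  card_eq_three.mpr ⟨v a, v b, v c, v.injective.ne (Fin.ne_of_val_ne (by omega)),
    v.injective.ne (Fin.ne_of_val_ne (by omega)), v.injective.ne (Fin.ne_of_val_ne (by omega)), rfl⟩

lemma inducedWordFrom_braid_up : inducedWordFrom A v [i + 1, i, i + 1] =
    (if v b ∈ A ∧ v c ∈ A then
      [#{x ∈ A | (v.symm x : ℕ) < a} + (if v a ∈ A then 1 else 0) + 1] else []) ++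
    (if v a ∈ A ∧ v c ∈ A then [#{x ∈ A | (v.symm x : ℕ) < a} + 1] else []) ++
    (if v a ∈ A ∧ v b ∈ A then
      [#{x ∈ A | (v.symm x : ℕ) < a} + (if v c ∈ A then 1 else 0) + 1] else []) := by
  have hab : a < b := by rw [Fin.lt_def]; omega
  have hac : a < c := by rw [Fin.lt_def]; omega
  have hbc : b < c := by rw [Fin.lt_def]; omega
  simp only [inducedWordFrom, adjT_of_lt a b ha hb, adjT_of_lt b c (by omega) hc,
    inducedLetter_of_lt A _ a b ha hb, inducedLetter_of_lt A _ b c (by omega) hc,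
    card_filter_symm_lt_of_succ A _ (by omega : (a : ℕ) + 1 = b),
    card_filter_mul_symm_lt A _ (swap a b) fun p hp => swap_apply_of_lt hp (hp.trans hab),
    card_filter_mul_symm_lt A _ (swap b c) fun p hp => swap_apply_of_lt (hp.trans hab)
      (hp.trans hac),
    Perm.mul_apply, swap_apply_left, swap_apply_right, swap_apply_of_ne_of_ne hab.ne hac.ne,
    swap_apply_of_ne_of_ne hac.ne' hbc.ne', apply_ite Option.toList, Option.toList_some,
    Option.toList_none, List.append_nil, List.append_assoc]

lemma inducedWordFrom_braid_down : inducedWordFrom A v [i, i + 1, i] =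
    (if v a ∈ A ∧ v b ∈ A then [#{x ∈ A | (v.symm x : ℕ) < a} + 1] else []) ++
    (if v a ∈ A ∧ v c ∈ A then
      [#{x ∈ A | (v.symm x : ℕ) < a} + (if v b ∈ A then 1 else 0) + 1] else []) ++
    (if v b ∈ A ∧ v c ∈ A then [#{x ∈ A | (v.symm x : ℕ) < a} + 1] else []) := by
  have hab : a < b := by rw [Fin.lt_def]; omega
  have hac : a < c := by rw [Fin.lt_def]; omega
  have hbc : b < c := by rw [Fin.lt_def]; omega
  simp only [inducedWordFrom, adjT_of_lt a b ha hb, adjT_of_lt b c (by omega) hc,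
    inducedLetter_of_lt A _ a b ha hb, inducedLetter_of_lt A _ b c (by omega) hc,
    card_filter_symm_lt_of_succ A _ (by omega : (a : ℕ) + 1 = b),
    card_filter_mul_symm_lt A _ (swap a b) fun p hp => swap_apply_of_lt hp (hp.trans hab),
    card_filter_mul_symm_lt A _ (swap b c) fun p hp => swap_apply_of_lt (hp.trans hab)
      (hp.trans hac),
    Perm.mul_apply, swap_apply_left, swap_apply_right, swap_apply_of_ne_of_ne hab.ne hac.ne,
    swap_apply_of_ne_of_ne hac.ne' hbc.ne', apply_ite Option.toList, Option.toList_some,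
    Option.toList_none, List.append_nil, List.append_assoc]

lemma card_filter_symm_lt_eq_zero :
    #{x ∈ ({v a, v b, v c} : Finset (Fin n)) | (v.symm x : ℕ) < a} = 0 := by
  simp only [card_eq_zero, filter_eq_empty_iff, mem_insert, mem_singleton]
  rintro x (rfl | rfl | rfl) <;> simp <;> omega

lemma inducedWordFrom_braid_up_triple :
    inducedWordFrom {v a, v b, v c} v [i + 1, i, i + 1] = [2, 1, 2] := by
  rw [inducedWordFrom_braid_up ha hb hc, card_filter_symm_lt_eq_zero ha hb hc]
  simp

lemma inducedWordFrom_braid_down_triple :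
    inducedWordFrom {v a, v b, v c} v [i, i + 1, i] = [1, 2, 1] := by
  rw [inducedWordFrom_braid_down ha hb hc, card_filter_symm_lt_eq_zero ha hb hc]
  simp

lemma inducedWordFrom_braid_of_not_subset (hA : ¬ {v a, v b, v c} ⊆ A) :
    inducedWordFrom A v [i + 1, i, i + 1] = inducedWordFrom A v [i, i + 1, i] := by
  rw [inducedWordFrom_braid_up ha hb hc, inducedWordFrom_braid_down ha hb hc]
  simp only [insert_subset_iff, singleton_subset_iff] at hA
  by_cases hx : v a ∈ A <;> by_cases hy : v b ∈ A <;> by_cases hz : v c ∈ A <;> simp_all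

variable {l r : List ℕ} {v} (hv : (l.map (adjT n)).prod = v)
include hv

lemma inducedWord_braid_of_not_subset (hA : ¬ {v a, v b, v c} ⊆ A) :
    inducedWord n (l ++ [i + 1, i, i + 1] ++ r) A = inducedWord n (l ++ [i, i + 1, i] ++ r) A := by
  rw [inducedWord_append_append, inducedWord_append_append, hv, prod_map_adjT_braid ha hb hc,
    inducedWordFrom_braid_of_not_subset ha hb hc A v hA]

lemma IsReducedDecomp.inducedWord_braid_triple {w : Perm (Fin n)}
    (h : IsReducedDecomp n w (l ++ [i + 1, i, i + 1] ++ r)) :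
    inducedWord n (l ++ [i + 1, i, i + 1] ++ r) {v a, v b, v c} = [2, 1, 2] ∧
      inducedWord n (l ++ [i, i + 1, i] ++ r) {v a, v b, v c} = [1, 2, 1] := by
  have hlen := h.length_inducedWord_le {v a, v b, v c}
  rw [inducedWord_append_append, hv, inducedWordFrom_braid_up_triple ha hb hc] at hlen ⊢
  rw [card_triple ha hb hc] at hlen
  simp only [List.length_append, List.length_cons, List.length_nil,
    show Nat.choose 3 2 = 3 from rfl] at hlen
  rw [inducedWord_append_append, hv, ← prod_map_adjT_braid ha hb hc,
    inducedWordFrom_braid_down_triple ha hb hc,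
    List.eq_nil_of_length_eq_zero (l := inducedWordFrom _ 1 l) (by omega),
    List.eq_nil_of_length_eq_zero (l := inducedWordFrom _ (v * _) r) (by omega)]
  exact ⟨rfl, rfl⟩

end BraidMove

/-- A downward long braid move decreases the number of
`(2,1,2)`-subnetworks by exactly 1. -/
theorem downward_move_decreases_count212
    (n : ℕ) (w : Equiv.Perm (Fin n)) (l r : List ℕ) (i : ℕ)
    (h : IsReducedDecomp n w (l ++ [i + 1, i, i + 1] ++ r)) :
    count212 n (l ++ [i, i + 1, i] ++ r) + 1 =
      count212 n (l ++ [i + 1, i, i + 1] ++ r) := by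
  have hi : 1 ≤ i := (h.1 i (by simp)).1
  have hn : i + 1 < n := (h.1 (i + 1) (by simp)).2
  obtain ⟨a, ha⟩ : ∃ a : Fin n, (a : ℕ) + 1 = i := ⟨⟨i - 1, by omega⟩, Nat.sub_add_cancel hi⟩
  obtain ⟨b, hb⟩ : ∃ b : Fin n, (b : ℕ) = i := ⟨⟨i, by omega⟩, rfl⟩
  obtain ⟨c, hc⟩ : ∃ c : Fin n, (c : ℕ) = i + 1 := ⟨⟨i + 1, hn⟩, rfl⟩
  obtain ⟨v, hv⟩ : ∃ v, (l.map (adjT n)).prod = v := ⟨_, rfl⟩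
  have hT := card_triple ha hb hc v
  obtain ⟨hup, hdown⟩ := h.inducedWord_braid_triple ha hb hc hv
  unfold count212
  refine card_filter_add_one_of_forall_ne univ (mem_univ _) ⟨hT, hup⟩
    (fun hT' => absurd (hdown.symm.trans hT'.2) (by decide)) fun A _ hA => and_congr_right ?_
  intro hA3
  rw [inducedWord_braid_of_not_subset ha hb hc A hv fun hTA =>
    hA (eq_of_subset_of_card_le hTA (by rw [hA3, hT])).symm]
end
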